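/- arXiv:1307.6318 — 2 statements merged into one kernel-verified Lean document; each statement's English description precedes it below -/
import Mathlib

section
/- In F(X,h), the maps sending a reduction rule P : M ⟶ N : A × B to the pair (πP, π'P), and sending a pair of rules (P1 : M1 ⟶ N1 : A, P2 : M2 ⟶ N2 : B) to the pairing (P1,P2) (both computed through η and the algebra map h), are mutually inverse, giving a bijection X2(C ⊢ M,N : A×B) ≅ X2(C ⊢ πM,πN : A) × X2(C ⊢ π'M,π'N : B). -/
/-! Syntax of the 2-λ-calculus over a 2-signature, following
"Cartesian closed 2-categories and permutation equivalence in
higher-order rewriting". -/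

/-- Simple types over a set `S` of sorts: `A ::= s | 1 | A × B | B^A`
(`arr A B` denotes `B^A`). -/
inductive Ty (S : Type) : Type
  | base (s : S)
  | unit
  | prod (A B : Ty S)
  | arr (A B : Ty S)

/-- A 1-signature over a fixed set `S` of sorts: operations with arities. -/
structure Sig1 (S : Type) : Type 1 where
  Op : Type
  opCtx : Op → List (Ty S)
  opTy : Op → Ty S

variable {S : Type}

/-- Raw λ-terms (de Bruijn indices) over a 1-signature.  Constant
application `const c args` applies an operation to a tuple of terms
(indices `≥ arity` are ignored by the typing rules). -/
inductive Tm (Sg : Sig1 S) : Type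
  | var (n : ℕ)
  | unit
  | pair (M N : Tm Sg)
  | fst (M : Tm Sg)
  | snd (M : Tm Sg)
  | lam (A : Ty S) (M : Tm Sg)
  | app (M N : Tm Sg)
  | const (c : Sg.Op) (args : ℕ → Tm Sg)

namespace Tm

variable {Sg : Sig1 S}

/-- Lift a renaming under a binder. -/
def liftRen (f : ℕ → ℕ) : ℕ → ℕ
  | 0 => 0
  | n + 1 => f n + 1

/-- Renaming of variables. -/
def ren (f : ℕ → ℕ) : Tm Sg → Tm Sg
  | var n => var (f n)
  | unit => unit
  | pair M N => pair (M.ren f) (N.ren f)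
  | fst M => fst (M.ren f)
  | snd M => snd (M.ren f)
  | lam A M => lam A (M.ren (liftRen f))
  | app M N => app (M.ren f) (N.ren f)
  | const c a => const c (fun i => (a i).ren f)

/-- Lift a simultaneous substitution under a binder. -/
def liftSub (σ : ℕ → Tm Sg) : ℕ → Tm Sg
  | 0 => var 0
  | n + 1 => (σ n).ren Nat.succ

/-- Simultaneous substitution. -/
def sub (σ : ℕ → Tm Sg) : Tm Sg → Tm Sg
  | var n => σ n
  | unit => unit
  | pair M N => pair (M.sub σ) (N.sub σ)
  | fst M => fst (M.sub σ)
  | snd M => snd (M.sub σ)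
  | lam A M => lam A (M.sub (liftSub σ))
  | app M N => app (M.sub σ) (N.sub σ)
  | const c a => const c (fun i => (a i).sub σ)

/-- Extension of a substitution by a term (for substituting a single
variable). -/
def cons (M : Tm Sg) (σ : ℕ → Tm Sg) : ℕ → Tm Sg
  | 0 => M
  | n + 1 => σ n

end Tm

/-- Typing judgement `Γ ⊢ M : A` for λ-terms. -/
inductive HasTy (Sg : Sig1 S) : List (Ty S) → Tm Sg → Ty S → Prop
  | var {Γ : List (Ty S)} {n : ℕ} (h : n < Γ.length) :
      HasTy Sg Γ (.var n) (Γ.get ⟨n, h⟩)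
  | unit {Γ} : HasTy Sg Γ .unit .unit
  | pair {Γ M N A B} : HasTy Sg Γ M A → HasTy Sg Γ N B →
      HasTy Sg Γ (.pair M N) (.prod A B)
  | fst {Γ M A B} : HasTy Sg Γ M (.prod A B) → HasTy Sg Γ (.fst M) A
  | snd {Γ M A B} : HasTy Sg Γ M (.prod A B) → HasTy Sg Γ (.snd M) B
  | lam {Γ M A B} : HasTy Sg (A :: Γ) M B → HasTy Sg Γ (.lam A M) (.arr A B)
  | app {Γ M N A B} : HasTy Sg Γ M (.arr A B) → HasTy Sg Γ N A →
      HasTy Sg Γ (.app M N) B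
  | const {Γ} {c : Sg.Op} {args : ℕ → Tm Sg}
      (h : ∀ i (hi : i < (Sg.opCtx c).length),
        HasTy Sg Γ (args i) ((Sg.opCtx c).get ⟨i, hi⟩)) :
      HasTy Sg Γ (.const c args) (Sg.opTy c)

/-- βη-equivalence of well-typed λ-terms. -/
inductive Beq (Sg : Sig1 S) : List (Ty S) → Tm Sg → Tm Sg → Ty S → Prop
  | refl {Γ M A} : HasTy Sg Γ M A → Beq Sg Γ M M A
  | symm {Γ M N A} : Beq Sg Γ M N A → Beq Sg Γ N M A
  | trans {Γ M N P A} : Beq Sg Γ M N A → Beq Sg Γ N P A → Beq Sg Γ M P A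
  | pairCong {Γ M M' N N' A B} : Beq Sg Γ M M' A → Beq Sg Γ N N' B →
      Beq Sg Γ (.pair M N) (.pair M' N') (.prod A B)
  | fstCong {Γ M M' A B} : Beq Sg Γ M M' (.prod A B) →
      Beq Sg Γ (.fst M) (.fst M') A
  | sndCong {Γ M M' A B} : Beq Sg Γ M M' (.prod A B) →
      Beq Sg Γ (.snd M) (.snd M') B
  | lamCong {Γ M M' A B} : Beq Sg (A :: Γ) M M' B →
      Beq Sg Γ (.lam A M) (.lam A M') (.arr A B)
  | appCong {Γ M M' N N' A B} : Beq Sg Γ M M' (.arr A B) → Beq Sg Γ N N' A →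
      Beq Sg Γ (.app M N) (.app M' N') B
  | constCong {Γ} {c : Sg.Op} {args args' : ℕ → Tm Sg}
      (h : ∀ i (hi : i < (Sg.opCtx c).length),
        Beq Sg Γ (args i) (args' i) ((Sg.opCtx c).get ⟨i, hi⟩)) :
      Beq Sg Γ (.const c args) (.const c args') (Sg.opTy c)
  | beta {Γ M N A B} : HasTy Sg (A :: Γ) M B → HasTy Sg Γ N A →
      Beq Sg Γ (.app (.lam A M) N) (M.sub (Tm.cons N .var)) B
  | eta {Γ M A B} : HasTy Sg Γ M (.arr A B) →
      Beq Sg Γ M (.lam A (.app (M.ren Nat.succ) (.var 0))) (.arr A B)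
  | prodBeta1 {Γ M N A B} : HasTy Sg Γ M A → HasTy Sg Γ N B →
      Beq Sg Γ (.fst (.pair M N)) M A
  | prodBeta2 {Γ M N A B} : HasTy Sg Γ M A → HasTy Sg Γ N B →
      Beq Sg Γ (.snd (.pair M N)) N B
  | prodEta {Γ M A B} : HasTy Sg Γ M (.prod A B) →
      Beq Sg Γ M (.pair (.fst M) (.snd M)) (.prod A B)
  | unitEta {Γ M} : HasTy Sg Γ M .unit → Beq Sg Γ M .unit .unit

/-- A 2-signature: a 1-signature together with a set of reduction rules
between parallel terms. -/
structure Sig2 (S : Type) : Type 1 where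
  sig : Sig1 S
  Rule : Type
  ruleCtx : Rule → List (Ty S)
  ruleTy : Rule → Ty S
  lhs : Rule → Tm sig
  rhs : Rule → Tm sig

/-- Raw reduction terms ("proof terms") over a 1-signature `Sg` and a set `R`
of reduction-rule names.  `vcomp P M Q` is the vertical composite
`P ;_M Q`. -/
inductive Rd (Sg : Sig1 S) (R : Type) : Type
  | var (n : ℕ)
  | unit
  | pair (P Q : Rd Sg R)
  | fst (P : Rd Sg R)
  | snd (P : Rd Sg R)
  | lam (A : Ty S) (P : Rd Sg R)
  | app (P Q : Rd Sg R)
  | const (c : Sg.Op) (args : ℕ → Rd Sg R)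
  | rule (r : R) (args : ℕ → Rd Sg R)
  | vcomp (P : Rd Sg R) (M : Tm Sg) (Q : Rd Sg R)

namespace Rd

variable {Sg : Sig1 S} {R R' : Type}

/-- Every term is an identity reduction on itself. -/
def toRd : Tm Sg → Rd Sg R
  | .var n => var n
  | .unit => unit
  | .pair M N => pair (toRd M) (toRd N)
  | .fst M => fst (toRd M)
  | .snd M => snd (toRd M)
  | .lam A M => lam A (toRd M)
  | .app M N => app (toRd M) (toRd N)
  | .const c a => const c (fun i => toRd (a i))

/-- Renaming of variables in reductions. -/
def ren (f : ℕ → ℕ) : Rd Sg R → Rd Sg R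
  | var n => var (f n)
  | unit => unit
  | pair P Q => pair (P.ren f) (Q.ren f)
  | fst P => fst (P.ren f)
  | snd P => snd (P.ren f)
  | lam A P => lam A (P.ren (Tm.liftRen f))
  | app P Q => app (P.ren f) (Q.ren f)
  | const c a => const c (fun i => (a i).ren f)
  | rule r a => rule r (fun i => (a i).ren f)
  | vcomp P M Q => vcomp (P.ren f) (M.ren f) (Q.ren f)

/-- Relabelling of rule names in a reduction. -/
def mapRule (g : R → R') : Rd Sg R → Rd Sg R'
  | var n => var n
  | unit => unit
  | pair P Q => pair (P.mapRule g) (Q.mapRule g)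
  | fst P => fst (P.mapRule g)
  | snd P => snd (P.mapRule g)
  | lam A P => lam A (P.mapRule g)
  | app P Q => app (P.mapRule g) (Q.mapRule g)
  | const c a => const c (fun i => (a i).mapRule g)
  | rule r a => rule (g r) (fun i => (a i).mapRule g)
  | vcomp P M Q => vcomp (P.mapRule g) M (Q.mapRule g)

/-- Lift a tuple of reductions under a binder. -/
def liftRd (Q : ℕ → Rd Sg R) : ℕ → Rd Sg R
  | 0 => var 0
  | n + 1 => (Q n).ren Nat.succ

/-- Extension of a tuple of reductions by a reduction. -/
def consRd (P : Rd Sg R) (τ : ℕ → Rd Sg R) : ℕ → Rd Sg R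
  | 0 => P
  | n + 1 => τ n

end Rd

/-- Left whiskering `M[Q]` of a term `M` by a tuple of reductions `Q`. -/
def lw {Sg : Sig1 S} {R : Type} (Q : ℕ → Rd Sg R) : Tm Sg → Rd Sg R
  | .var n => Q n
  | .unit => .unit
  | .pair M N => .pair (lw Q M) (lw Q N)
  | .fst M => .fst (lw Q M)
  | .snd M => .snd (lw Q M)
  | .lam A M => .lam A (lw (Rd.liftRd Q) M)
  | .app M N => .app (lw Q M) (lw Q N)
  | .const c a => .const c (fun i => lw Q (a i))

/-- Right whiskering `P[N]` of a reduction `P` by a tuple of terms `N`. -/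
def rw {Sg : Sig1 S} {R : Type} (N : ℕ → Tm Sg) : Rd Sg R → Rd Sg R
  | .var n => Rd.toRd (N n)
  | .unit => .unit
  | .pair P Q => .pair (rw N P) (rw N Q)
  | .fst P => .fst (rw N P)
  | .snd P => .snd (rw N P)
  | .lam A P => .lam A (rw (Tm.liftSub N) P)
  | .app P Q => .app (rw N P) (rw N Q)
  | .const c a => .const c (fun i => rw N (a i))
  | .rule r a => .rule r (fun i => rw N (a i))
  | .vcomp P M Q => .vcomp (rw N P) (M.sub N) (rw N Q)

/-- Substitution of a tuple of reductions `Q : N ⟶ N'` into a reduction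
`P : M ⟶ M'`, defined as `P[N] ;_{M'[N]} M'[Q]`. -/
def rdSub {Sg : Sig1 S} {R : Type} (P : Rd Sg R) (N : ℕ → Tm Sg) (M' : Tm Sg)
    (Q : ℕ → Rd Sg R) : Rd Sg R :=
  .vcomp (rw N P) (M'.sub N) (lw Q M')

/-- The typing judgement `Γ ⊢ P : M ⟶ N : A` for reductions. -/
inductive RdJ (X : Sig2 S) : List (Ty S) → Rd X.sig X.Rule → Tm X.sig → Tm X.sig → Ty S → Prop
  | rule {Γ} {r : X.Rule} {args : ℕ → Rd X.sig X.Rule} {Ms Ns : ℕ → Tm X.sig}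
      (h : ∀ i (hi : i < (X.ruleCtx r).length),
        RdJ X Γ (args i) (Ms i) (Ns i) ((X.ruleCtx r).get ⟨i, hi⟩)) :
      RdJ X Γ (.rule r args) ((X.lhs r).sub Ms) ((X.rhs r).sub Ns) (X.ruleTy r)
  | vcomp {Γ P Q M₁ M₂ M₃ A} : RdJ X Γ P M₁ M₂ A → RdJ X Γ Q M₂ M₃ A →
      RdJ X Γ (.vcomp P M₂ Q) M₁ M₃ A
  | var {Γ : List (Ty S)} {n : ℕ} (h : n < Γ.length) :
      RdJ X Γ (.var n) (.var n) (.var n) (Γ.get ⟨n, h⟩)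
  | unit {Γ} : RdJ X Γ .unit .unit .unit .unit
  | const {Γ} {c : X.sig.Op} {args : ℕ → Rd X.sig X.Rule} {Ms Ns : ℕ → Tm X.sig}
      (h : ∀ i (hi : i < (X.sig.opCtx c).length),
        RdJ X Γ (args i) (Ms i) (Ns i) ((X.sig.opCtx c).get ⟨i, hi⟩)) :
      RdJ X Γ (.const c args) (.const c Ms) (.const c Ns) (X.sig.opTy c)
  | lam {Γ P M N A B} : RdJ X (A :: Γ) P M N B →
      RdJ X Γ (.lam A P) (.lam A M) (.lam A N) (.arr A B)
  | app {Γ P Q M M' N N' A B} : RdJ X Γ P M M' (.arr A B) → RdJ X Γ Q N N' A →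
      RdJ X Γ (.app P Q) (.app M N) (.app M' N') B
  | pair {Γ P Q M M' N N' A B} : RdJ X Γ P M M' A → RdJ X Γ Q N N' B →
      RdJ X Γ (.pair P Q) (.pair M N) (.pair M' N') (.prod A B)
  | fst {Γ P M N A B} : RdJ X Γ P M N (.prod A B) →
      RdJ X Γ (.fst P) (.fst M) (.fst N) A
  | snd {Γ P M N A B} : RdJ X Γ P M N (.prod A B) →
      RdJ X Γ (.snd P) (.snd M) (.snd N) B
  | conv {Γ P M N M' N' A} : RdJ X Γ P M N A → Beq X.sig Γ M M' A →
      Beq X.sig Γ N N' A → RdJ X Γ P M' N' A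
/-- Permutation equivalence `Γ ⊢ P ≡ Q : M ⟶ N : A` on reductions:
the congruence generated by the category laws for vertical composition,
β/η-rules at the level of reductions, and the lifting rules. -/
inductive PEq (X : Sig2 S) : List (Ty S) → Rd X.sig X.Rule → Rd X.sig X.Rule → Tm X.sig → Tm X.sig → Ty S → Prop
  -- congruence rules
  | refl {Γ P M N A} : RdJ X Γ P M N A → PEq X Γ P P M N A
  | symm {Γ P Q M N A} : PEq X Γ P Q M N A → PEq X Γ Q P M N A
  | trans {Γ P Q R₀ M N A} : PEq X Γ P Q M N A → PEq X Γ Q R₀ M N A →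
      PEq X Γ P R₀ M N A
  | vcompCong {Γ P P' Q Q' M₁ M₂ M₃ A} : PEq X Γ P P' M₁ M₂ A →
      PEq X Γ Q Q' M₂ M₃ A →
      PEq X Γ (.vcomp P M₂ Q) (.vcomp P' M₂ Q') M₁ M₃ A
  | ruleCong {Γ} {r : X.Rule} {P Q : ℕ → Rd X.sig X.Rule} {Ms Ns : ℕ → Tm X.sig}
      (h : ∀ i (hi : i < (X.ruleCtx r).length),
        PEq X Γ (P i) (Q i) (Ms i) (Ns i) ((X.ruleCtx r).get ⟨i, hi⟩)) :
      PEq X Γ (.rule r P) (.rule r Q) ((X.lhs r).sub Ms) ((X.rhs r).sub Ns) (X.ruleTy r)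
  | constCong {Γ} {c : X.sig.Op} {P Q : ℕ → Rd X.sig X.Rule} {Ms Ns : ℕ → Tm X.sig}
      (h : ∀ i (hi : i < (X.sig.opCtx c).length),
        PEq X Γ (P i) (Q i) (Ms i) (Ns i) ((X.sig.opCtx c).get ⟨i, hi⟩)) :
      PEq X Γ (.const c P) (.const c Q) (.const c Ms) (.const c Ns) (X.sig.opTy c)
  | lamCong {Γ P Q M N A B} : PEq X (A :: Γ) P Q M N B →
      PEq X Γ (.lam A P) (.lam A Q) (.lam A M) (.lam A N) (.arr A B)
  | appCong {Γ P P' Q Q' M M' N N' A B} : PEq X Γ P P' M M' (.arr A B) →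
      PEq X Γ Q Q' N N' A →
      PEq X Γ (.app P Q) (.app P' Q') (.app M N) (.app M' N') B
  | pairCong {Γ P P' Q Q' M M' N N' A B} : PEq X Γ P P' M M' A →
      PEq X Γ Q Q' N N' B →
      PEq X Γ (.pair P Q) (.pair P' Q') (.pair M N) (.pair M' N') (.prod A B)
  | fstCong {Γ P Q M N A B} : PEq X Γ P Q M N (.prod A B) →
      PEq X Γ (.fst P) (.fst Q) (.fst M) (.fst N) A
  | sndCong {Γ P Q M N A B} : PEq X Γ P Q M N (.prod A B) →
      PEq X Γ (.snd P) (.snd Q) (.snd M) (.snd N) B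
  -- category rules
  | assoc {Γ P₁ P₂ P₃ M₁ M₂ M₃ M₄ A} : RdJ X Γ P₁ M₁ M₂ A → RdJ X Γ P₂ M₂ M₃ A →
      RdJ X Γ P₃ M₃ M₄ A →
      PEq X Γ (.vcomp P₁ M₂ (.vcomp P₂ M₃ P₃)) (.vcomp (.vcomp P₁ M₂ P₂) M₃ P₃) M₁ M₄ A
  | unitR {Γ P M N A} : RdJ X Γ P M N A →
      PEq X Γ (.vcomp P N (Rd.toRd N)) P M N A
  | unitL {Γ P M N A} : RdJ X Γ P M N A →
      PEq X Γ (.vcomp (Rd.toRd M) M P) P M N A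
  -- beta and eta rules
  | beta {Γ P Q M M' N N' A B} : RdJ X (A :: Γ) P M M' B → RdJ X Γ Q N N' A →
      PEq X Γ (.app (.lam A P) Q)
        (rdSub P (Tm.cons N Tm.var) M' (Rd.consRd Q (fun n => Rd.var n)))
        (.app (.lam A M) N) (M'.sub (Tm.cons N' Tm.var)) B
  | eta {Γ P M N A B} : RdJ X Γ P M N (.arr A B) →
      PEq X Γ P (.lam A (.app (P.ren Nat.succ) (.var 0))) M N (.arr A B)
  | fstPair {Γ P Q M₁ M₂ N₁ N₂ A B} : RdJ X Γ P M₁ M₂ A → RdJ X Γ Q N₁ N₂ B →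
      PEq X Γ (.fst (.pair P Q)) P (.fst (.pair M₁ N₁)) M₂ A
  | sndPair {Γ P Q M₁ M₂ N₁ N₂ A B} : RdJ X Γ P M₁ M₂ A → RdJ X Γ Q N₁ N₂ B →
      PEq X Γ (.snd (.pair P Q)) Q (.snd (.pair M₁ N₁)) N₂ B
  | pairEta {Γ P M₁ M₂ N₁ N₂ A B} : RdJ X Γ P (.pair M₁ N₁) (.pair M₂ N₂) (.prod A B) →
      PEq X Γ P (.pair (.fst P) (.snd P)) (.pair M₁ N₁) (.pair M₂ N₂) (.prod A B)
  | unitEta {Γ P M N} : RdJ X Γ P M N .unit → PEq X Γ P .unit M N .unit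
  -- lifting rules
  | ruleLift1 {Δ} {r : X.Rule} {P Q : ℕ → Rd X.sig X.Rule} {N₁ N₂ N₃ : ℕ → Tm X.sig}
      (hP : ∀ i (hi : i < (X.ruleCtx r).length),
        RdJ X Δ (P i) (N₁ i) (N₂ i) ((X.ruleCtx r).get ⟨i, hi⟩))
      (hQ : ∀ i (hi : i < (X.ruleCtx r).length),
        RdJ X Δ (Q i) (N₂ i) (N₃ i) ((X.ruleCtx r).get ⟨i, hi⟩)) :
      PEq X Δ (.rule r (fun i => .vcomp (P i) (N₂ i) (Q i)))
        (.vcomp (lw P (X.lhs r)) ((X.lhs r).sub N₂) (.rule r Q))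
        ((X.lhs r).sub N₁) ((X.rhs r).sub N₃) (X.ruleTy r)
  | ruleLift2 {Δ} {r : X.Rule} {P Q : ℕ → Rd X.sig X.Rule} {N₁ N₂ N₃ : ℕ → Tm X.sig}
      (hP : ∀ i (hi : i < (X.ruleCtx r).length),
        RdJ X Δ (P i) (N₁ i) (N₂ i) ((X.ruleCtx r).get ⟨i, hi⟩))
      (hQ : ∀ i (hi : i < (X.ruleCtx r).length),
        RdJ X Δ (Q i) (N₂ i) (N₃ i) ((X.ruleCtx r).get ⟨i, hi⟩)) :
      PEq X Δ (.rule r (fun i => .vcomp (P i) (N₂ i) (Q i)))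
        (.vcomp (.rule r P) ((X.rhs r).sub N₂) (lw Q (X.rhs r)))
        ((X.lhs r).sub N₁) ((X.rhs r).sub N₃) (X.ruleTy r)
  | constLift {Γ} {c : X.sig.Op} {P Q : ℕ → Rd X.sig X.Rule} {M₁ M₂ M₃ : ℕ → Tm X.sig}
      (hP : ∀ i (hi : i < (X.sig.opCtx c).length),
        RdJ X Γ (P i) (M₁ i) (M₂ i) ((X.sig.opCtx c).get ⟨i, hi⟩))
      (hQ : ∀ i (hi : i < (X.sig.opCtx c).length),
        RdJ X Γ (Q i) (M₂ i) (M₃ i) ((X.sig.opCtx c).get ⟨i, hi⟩)) :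
      PEq X Γ (.const c (fun i => .vcomp (P i) (M₂ i) (Q i)))
        (.vcomp (.const c P) (.const c M₂) (.const c Q))
        (.const c M₁) (.const c M₃) (X.sig.opTy c)
  | lamLift {Γ P Q M₁ M₂ M₃ A B} : RdJ X (A :: Γ) P M₁ M₂ B →
      RdJ X (A :: Γ) Q M₂ M₃ B →
      PEq X Γ (.lam A (.vcomp P M₂ Q))
        (.vcomp (.lam A P) (.lam A M₂) (.lam A Q))
        (.lam A M₁) (.lam A M₃) (.arr A B)
  | appLift {Γ P P' Q Q' M₁ M₂ M₃ N₁ N₂ N₃ A B} :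
      RdJ X Γ P M₁ M₂ (.arr A B) → RdJ X Γ P' M₂ M₃ (.arr A B) →
      RdJ X Γ Q N₁ N₂ A → RdJ X Γ Q' N₂ N₃ A →
      PEq X Γ (.app (.vcomp P M₂ P') (.vcomp Q N₂ Q'))
        (.vcomp (.app P Q) (.app M₂ N₂) (.app P' Q'))
        (.app M₁ N₁) (.app M₃ N₃) B
  | pairLift {Γ P P' Q Q' M₁ M₂ M₃ N₁ N₂ N₃ A B} :
      RdJ X Γ P M₁ M₂ A → RdJ X Γ P' M₂ M₃ A →
      RdJ X Γ Q N₁ N₂ B → RdJ X Γ Q' N₂ N₃ B →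
      PEq X Γ (.pair (.vcomp P M₂ P') (.vcomp Q N₂ Q'))
        (.vcomp (.pair P Q) (.pair M₂ N₂) (.pair P' Q'))
        (.pair M₁ N₁) (.pair M₃ N₃) (.prod A B)
  | fstLift {Γ P Q M₁ M₂ M₃ A B} : RdJ X Γ P M₁ M₂ (.prod A B) →
      RdJ X Γ Q M₂ M₃ (.prod A B) →
      PEq X Γ (.fst (.vcomp P M₂ Q)) (.vcomp (.fst P) (.fst M₂) (.fst Q))
        (.fst M₁) (.fst M₃) A
  | sndLift {Γ P Q M₁ M₂ M₃ A B} : RdJ X Γ P M₁ M₂ (.prod A B) →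
      RdJ X Γ Q M₂ M₃ (.prod A B) →
      PEq X Γ (.snd (.vcomp P M₂ Q)) (.vcomp (.snd P) (.snd M₂) (.snd Q))
        (.snd M₁) (.snd M₃) B
  -- endpoints are βη-classes
  | conv {Γ P Q M N M' N' A} : PEq X Γ P Q M N A → Beq X.sig Γ M M' A →
      Beq X.sig Γ N N' A → PEq X Γ P Q M' N' A
/-- The rules of the 2-signature `L X`: reductions over `X` together with
their boundary (which the paper takes modulo permutation equivalence). -/
structure LRule (X : Sig2 S) : Type where
  ctx : List (Ty S)
  red : Rd X.sig X.Rule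
  src : Tm X.sig
  tgt : Tm X.sig
  ty : Ty S

/-- The 2-signature `L X`: same sorts and operations as `X`, and with
reduction rules the reductions over `X`. -/
def LSig (X : Sig2 S) : Sig2 S where
  sig := X.sig
  Rule := LRule X
  ruleCtx := LRule.ctx
  ruleTy := LRule.ty
  lhs := LRule.src
  rhs := LRule.tgt

/-- Source endpoint of a raw reduction. -/
def srcRd (X : Sig2 S) : Rd X.sig X.Rule → Tm X.sig
  | .var n => .var n
  | .unit => .unit
  | .pair P Q => .pair (srcRd X P) (srcRd X Q)
  | .fst P => .fst (srcRd X P)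
  | .snd P => .snd (srcRd X P)
  | .lam A P => .lam A (srcRd X P)
  | .app P Q => .app (srcRd X P) (srcRd X Q)
  | .const c a => .const c (fun i => srcRd X (a i))
  | .rule r a => (X.lhs r).sub (fun i => srcRd X (a i))
  | .vcomp P _ _ => srcRd X P

/-- Target endpoint of a raw reduction. -/
def tgtRd (X : Sig2 S) : Rd X.sig X.Rule → Tm X.sig
  | .var n => .var n
  | .unit => .unit
  | .pair P Q => .pair (tgtRd X P) (tgtRd X Q)
  | .fst P => .fst (tgtRd X P)
  | .snd P => .snd (tgtRd X P)
  | .lam A P => .lam A (tgtRd X P)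
  | .app P Q => .app (tgtRd X P) (tgtRd X Q)
  | .const c a => .const c (fun i => tgtRd X (a i))
  | .rule r a => (X.rhs r).sub (fun i => tgtRd X (a i))
  | .vcomp _ _ Q => tgtRd X Q

/-- The multiplication `μ_X : L (L X) → L X` on reductions: a rule
application `R⟨P₁,…,Pₙ⟩` is interpreted as the substitution `R[μP₁,…,μPₙ]`,
and `μ` commutes with all the other constructors. -/
def mu (X : Sig2 S) : Rd X.sig (LRule X) → Rd X.sig X.Rule
  | .var n => .var n
  | .unit => .unit
  | .pair P Q => .pair (mu X P) (mu X Q)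
  | .fst P => .fst (mu X P)
  | .snd P => .snd (mu X P)
  | .lam A P => .lam A (mu X P)
  | .app P Q => .app (mu X P) (mu X Q)
  | .const c a => .const c (fun i => mu X (a i))
  | .rule Rr a => rdSub Rr.red (fun i => srcRd X (mu X (a i))) Rr.tgt (fun i => mu X (a i))
  | .vcomp P M Q => .vcomp (mu X P) M (mu X Q)

/-- The unit `η` on reductions: `r ↦ r⟨x₁,…,xₙ⟩`. -/
def etaRd (X : Sig2 S) (r : X.Rule) : Rd X.sig X.Rule :=
  .rule r (fun i => .var i)

/-- The unit `η_X : X → L X` on rules. -/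
def etaRule (X : Sig2 S) (r : X.Rule) : LRule X :=
  ⟨X.ruleCtx r, etaRd X r, X.lhs r, X.rhs r, X.ruleTy r⟩

/-- The rule component of `μ_X : L (L X) → L X`. -/
def muRule (X : Sig2 S) (R₀ : LRule (LSig X)) : LRule X :=
  ⟨R₀.ctx, mu X R₀.red, R₀.src, R₀.tgt, R₀.ty⟩

section Aux

variable {Sg : Sig1 S} {R : Type}

lemma liftSub_var : Tm.liftSub (Tm.var : ℕ → Tm Sg) = Tm.var := by
  funext n; cases n <;> rfl

lemma sub_id (M : Tm Sg) : M.sub Tm.var = M := by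
  induction M with
  | var n => rfl
  | unit => rfl
  | pair M N ihM ihN => simp [Tm.sub, ihM, ihN]
  | fst M ih => simp [Tm.sub, ih]
  | snd M ih => simp [Tm.sub, ih]
  | lam A M ih => simp [Tm.sub, liftSub_var, ih]
  | app M N ihM ihN => simp [Tm.sub, ihM, ihN]
  | const c a ih => simp [Tm.sub]; funext i; exact ih i

lemma liftRd_var : Rd.liftRd (Rd.var : ℕ → Rd Sg R) = Rd.var := by
  funext n; cases n <;> rfl

lemma lw_var (M : Tm Sg) : lw (Rd.var : ℕ → Rd Sg R) M = Rd.toRd M := by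
  induction M with
  | var n => rfl
  | unit => rfl
  | pair M N ihM ihN => simp [lw, Rd.toRd, ihM, ihN]
  | fst M ih => simp [lw, Rd.toRd, ih]
  | snd M ih => simp [lw, Rd.toRd, ih]
  | lam A M ih => simp [lw, Rd.toRd, liftRd_var, ih]
  | app M N ihM ihN => simp [lw, Rd.toRd, ihM, ihN]
  | const c a ih => simp [lw, Rd.toRd]; funext i; exact ih i

lemma rw_var (P : Rd Sg R) : rw Tm.var P = P := by
  induction P with
  | var n => rfl
  | unit => rfl
  | pair P Q ihP ihQ => simp [rw, ihP, ihQ]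
  | fst P ih => simp [rw, ih]
  | snd P ih => simp [rw, ih]
  | lam A P ih => simp [rw, liftSub_var, ih]
  | app P Q ihP ihQ => simp [rw, ihP, ihQ]
  | const c a ih => simp [rw]; funext i; exact ih i
  | rule r a ih => simp [rw]; funext i; exact ih i
  | vcomp P M Q ihP ihQ => simp [rw, sub_id, ihP, ihQ]

end Aux

lemma mu_rule_var (X : Sig2 S) (Rr : LRule X) :
    mu X (.rule Rr (fun i => .var i)) = .vcomp Rr.red Rr.tgt (Rd.toRd Rr.tgt) := by
  have h1 : (fun i => srcRd X (mu X (Rd.var i : Rd X.sig (LRule X)))) = Tm.var :=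
    funext fun i => rfl
  have h2 : (fun i => mu X (Rd.var i : Rd X.sig (LRule X))) = Rd.var :=
    funext fun i => rfl
  rw [mu, h1, h2, rdSub, rw_var, sub_id, lw_var]

lemma etaRdJ (X : Sig2 S) (r : X.Rule) :
    RdJ X (X.ruleCtx r) (etaRd X r) (X.lhs r) (X.rhs r) (X.ruleTy r) := by
  have hj := RdJ.rule (X := X) (Γ := X.ruleCtx r) (r := r) (args := fun i => .var i)
    (Ms := Tm.var) (Ns := Tm.var) (fun i hi => RdJ.var hi)
  rwa [sub_id, sub_id] at hj

/-- In `F(X,h)`, the maps `u : P ↦ (πP, π'P)` and `v : (P₁,P₂) ↦ (P₁,P₂)`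
(computed through `η` and the algebra map `h`) are mutually inverse, giving
a bijection
`X₂(C ⊢ M,N : A×B) ≅ X₂(C ⊢ πM,πN : A) × X₂(C ⊢ π'M,π'N : B)`. -/
theorem product_bijection_on_2cells (X : Sig2 S)
    (h : List (Ty S) → Rd X.sig X.Rule → X.Rule)
    -- h respects permutation equivalence
    (hPEq : ∀ Γ P Q M N A, PEq X Γ P Q M N A → h Γ P = h Γ Q)
    -- the algebra law h ∘ L(h) = h ∘ μ
    (hAlg : ∀ Γ (T : Rd X.sig (LRule X)),
      h Γ (Rd.mapRule (fun R₀ => h R₀.ctx R₀.red) T) = h Γ (mu X T))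
    -- the algebra law h ∘ η = id
    (hEta : ∀ r : X.Rule, h (X.ruleCtx r) (etaRd X r) = r)
    -- rules of X are well-typed
    (hwt : ∀ r : X.Rule, HasTy X.sig (X.ruleCtx r) (X.lhs r) (X.ruleTy r) ∧
      HasTy X.sig (X.ruleCtx r) (X.rhs r) (X.ruleTy r))
    {C₀ A B : Ty S} :
    -- v ∘ u = id
    (∀ (r : X.Rule) (M N : Tm X.sig),
      X.ruleCtx r = [C₀] → X.ruleTy r = .prod A B → X.lhs r = M → X.rhs r = N →
      h [C₀] (.pair (etaRd X (h [C₀] (.fst (etaRd X r))))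
          (etaRd X (h [C₀] (.snd (etaRd X r))))) = r) ∧
    -- u ∘ v = id
    (∀ (r₁ r₂ : X.Rule) (M₁ N₁ M₂ N₂ : Tm X.sig),
      X.ruleCtx r₁ = [C₀] → X.ruleTy r₁ = A → X.lhs r₁ = M₁ → X.rhs r₁ = N₁ →
      X.ruleCtx r₂ = [C₀] → X.ruleTy r₂ = B → X.lhs r₂ = M₂ → X.rhs r₂ = N₂ →
      h [C₀] (.fst (etaRd X (h [C₀] (.pair (etaRd X r₁) (etaRd X r₂))))) = r₁ ∧
      h [C₀] (.snd (etaRd X (h [C₀] (.pair (etaRd X r₁) (etaRd X r₂))))) = r₂) := by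
  constructor
  · intro r M N hctx hty hlhs hrhs
    have Jη : RdJ X [C₀] (etaRd X r) (X.lhs r) (X.rhs r) (.prod A B) := by
      have := etaRdJ X r; rwa [hctx, hty] at this
    have hL : HasTy X.sig [C₀] (X.lhs r) (.prod A B) := by
      have := (hwt r).1; rwa [hctx, hty] at this
    have hR : HasTy X.sig [C₀] (X.rhs r) (.prod A B) := by
      have := (hwt r).2; rwa [hctx, hty] at this
    have J1 : RdJ X [C₀] (.fst (etaRd X r)) (.fst (X.lhs r)) (.fst (X.rhs r)) A := .fst Jη
    have J2 : RdJ X [C₀] (.snd (etaRd X r)) (.snd (X.lhs r)) (.snd (X.rhs r)) B := .snd Jη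
    set R₁ : LRule X := ⟨[C₀], .fst (etaRd X r), .fst (X.lhs r), .fst (X.rhs r), A⟩ with hR₁
    set R₂ : LRule X := ⟨[C₀], .snd (etaRd X r), .snd (X.lhs r), .snd (X.rhs r), B⟩ with hR₂
    have halg := hAlg [C₀]
      (.pair (.rule R₁ (fun i => .var i)) (.rule R₂ (fun i => .var i)))
    have hmap : Rd.mapRule (fun R₀ => h R₀.ctx R₀.red)
        (.pair (.rule R₁ (fun i => .var i)) (.rule R₂ (fun i => .var i)) :
          Rd X.sig (LRule X)) =
        .pair (etaRd X (h [C₀] (.fst (etaRd X r)))) (etaRd X (h [C₀] (.snd (etaRd X r)))) := rfl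
    have hmu : mu X
        (.pair (.rule R₁ (fun i => .var i)) (.rule R₂ (fun i => .var i))) =
        .pair (.vcomp (.fst (etaRd X r)) (.fst (X.rhs r)) (Rd.toRd (.fst (X.rhs r))))
          (.vcomp (.snd (etaRd X r)) (.snd (X.rhs r)) (Rd.toRd (.snd (X.rhs r)))) := by
      rw [mu, mu_rule_var, mu_rule_var]
    rw [hmap, hmu] at halg
    have p1 : PEq X [C₀]
        (.pair (.vcomp (.fst (etaRd X r)) (.fst (X.rhs r)) (Rd.toRd (.fst (X.rhs r))))
          (.vcomp (.snd (etaRd X r)) (.snd (X.rhs r)) (Rd.toRd (.snd (X.rhs r)))))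
        (.pair (.fst (etaRd X r)) (.snd (etaRd X r)))
        (.pair (.fst (X.lhs r)) (.snd (X.lhs r)))
        (.pair (.fst (X.rhs r)) (.snd (X.rhs r))) (.prod A B) :=
      .pairCong (.unitR J1) (.unitR J2)
    have Jη' : RdJ X [C₀] (etaRd X r)
        (.pair (.fst (X.lhs r)) (.snd (X.lhs r)))
        (.pair (.fst (X.rhs r)) (.snd (X.rhs r))) (.prod A B) :=
      .conv Jη (.prodEta hL) (.prodEta hR)
    have p := p1.trans (PEq.pairEta Jη').symm
    rw [halg, hPEq _ _ _ _ _ _ p]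
    have he := hEta r; rwa [hctx] at he
  · intro r₁ r₂ M₁ N₁ M₂ N₂ hc1 ht1 hl1 hr1 hc2 ht2 hl2 hr2
    have Jη₁ : RdJ X [C₀] (etaRd X r₁) (X.lhs r₁) (X.rhs r₁) A := by
      have := etaRdJ X r₁; rwa [hc1, ht1] at this
    have Jη₂ : RdJ X [C₀] (etaRd X r₂) (X.lhs r₂) (X.rhs r₂) B := by
      have := etaRdJ X r₂; rwa [hc2, ht2] at this
    have hL1 : HasTy X.sig [C₀] (X.lhs r₁) A := by
      have := (hwt r₁).1; rwa [hc1, ht1] at this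
    have hRt1 : HasTy X.sig [C₀] (X.rhs r₁) A := by
      have := (hwt r₁).2; rwa [hc1, ht1] at this
    have hL2 : HasTy X.sig [C₀] (X.lhs r₂) B := by
      have := (hwt r₂).1; rwa [hc2, ht2] at this
    have hRt2 : HasTy X.sig [C₀] (X.rhs r₂) B := by
      have := (hwt r₂).2; rwa [hc2, ht2] at this
    have Jp : RdJ X [C₀] (.pair (etaRd X r₁) (etaRd X r₂))
        (.pair (X.lhs r₁) (X.lhs r₂)) (.pair (X.rhs r₁) (X.rhs r₂)) (.prod A B) :=
      .pair Jη₁ Jη₂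
    set Rp : LRule X := ⟨[C₀], .pair (etaRd X r₁) (etaRd X r₂),
      .pair (X.lhs r₁) (X.lhs r₂), .pair (X.rhs r₁) (X.rhs r₂), .prod A B⟩ with hRp
    have hmuR := mu_rule_var X Rp
    constructor
    · have halg := hAlg [C₀] (.fst (.rule Rp (fun i => .var i)))
      have hmap : Rd.mapRule (fun R₀ => h R₀.ctx R₀.red)
          (.fst (.rule Rp (fun i => .var i)) : Rd X.sig (LRule X)) =
          .fst (etaRd X (h [C₀] (.pair (etaRd X r₁) (etaRd X r₂)))) := rfl
      have hmu : mu X (.fst (.rule Rp (fun i => .var i))) =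
          .fst (.vcomp (.pair (etaRd X r₁) (etaRd X r₂))
            (.pair (X.rhs r₁) (X.rhs r₂))
            (Rd.toRd (.pair (X.rhs r₁) (X.rhs r₂)))) := by
        rw [mu, hmuR]
      rw [hmap, hmu] at halg
      have p1 : PEq X [C₀]
          (.fst (.vcomp (.pair (etaRd X r₁) (etaRd X r₂))
            (.pair (X.rhs r₁) (X.rhs r₂))
            (Rd.toRd (.pair (X.rhs r₁) (X.rhs r₂)))))
          (.fst (.pair (etaRd X r₁) (etaRd X r₂)))
          (.fst (.pair (X.lhs r₁) (X.lhs r₂)))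
          (.fst (.pair (X.rhs r₁) (X.rhs r₂))) A :=
        .fstCong (.unitR Jp)
      have p1' := p1.conv (Beq.refl (HasTy.fst (HasTy.pair hL1 hL2)))
        (Beq.prodBeta1 hRt1 hRt2)
      have p := p1'.trans (PEq.fstPair Jη₁ Jη₂)
      rw [halg, hPEq _ _ _ _ _ _ p]
      have he := hEta r₁; rwa [hc1] at he
    · have halg := hAlg [C₀] (.snd (.rule Rp (fun i => .var i)))
      have hmap : Rd.mapRule (fun R₀ => h R₀.ctx R₀.red)
          (.snd (.rule Rp (fun i => .var i)) : Rd X.sig (LRule X)) =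
          .snd (etaRd X (h [C₀] (.pair (etaRd X r₁) (etaRd X r₂)))) := rfl
      have hmu : mu X (.snd (.rule Rp (fun i => .var i))) =
          .snd (.vcomp (.pair (etaRd X r₁) (etaRd X r₂))
            (.pair (X.rhs r₁) (X.rhs r₂))
            (Rd.toRd (.pair (X.rhs r₁) (X.rhs r₂)))) := by
        rw [mu, hmuR]
      rw [hmap, hmu] at halg
      have p1 : PEq X [C₀]
          (.snd (.vcomp (.pair (etaRd X r₁) (etaRd X r₂))
            (.pair (X.rhs r₁) (X.rhs r₂))
            (Rd.toRd (.pair (X.rhs r₁) (X.rhs r₂)))))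
          (.snd (.pair (etaRd X r₁) (etaRd X r₂)))
          (.snd (.pair (X.lhs r₁) (X.lhs r₂)))
          (.snd (.pair (X.rhs r₁) (X.rhs r₂))) B :=
        .sndCong (.unitR Jp)
      have p1' := p1.conv (Beq.refl (HasTy.snd (HasTy.pair hL1 hL2)))
        (Beq.prodBeta2 hRt1 hRt2)
      have p := p1'.trans (PEq.sndPair Jη₁ Jη₂)
      rw [halg, hPEq _ _ _ _ _ _ p]
      have he := hEta r₂; rwa [hc2] at he
end

section
/- For a higher-order rewrite system X, the locally-preordered 2-category R(X) — with objects the types over X0, morphisms λ-terms modulo βη, and a unique 2-cell M → N exactly when M rewrites to N in finitely many steps — is cartesian closed as a 2-category. -/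
variable {S : Type}

/-- Occurrence of a free variable in a term. -/
def FreeIn {Sg : Sig1 S} : ℕ → Tm Sg → Prop
  | i, .var n => i = n
  | _, .unit => False
  | i, .pair M N => FreeIn i M ∨ FreeIn i N
  | i, .fst M => FreeIn i M
  | i, .snd M => FreeIn i M
  | i, .lam _ M => FreeIn (i + 1) M
  | i, .app M N => FreeIn i M ∨ FreeIn i N
  | i, .const c a => ∃ j, j < (Sg.opCtx c).length ∧ FreeIn i (a j)

/-- A higher-order rewrite system in the sense of Nipkow: a 2-signature
whose rules have well-typed sides, non-variable left-hand sides, base-type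
rule types, and all context variables occurring free in the left-hand
side. -/
def IsHRS (X : Sig2 S) : Prop :=
  ∀ r : X.Rule,
    HasTy X.sig (X.ruleCtx r) (X.lhs r) (X.ruleTy r) ∧
    HasTy X.sig (X.ruleCtx r) (X.rhs r) (X.ruleTy r) ∧
    (∀ n, X.lhs r ≠ .var n) ∧
    (∃ s, X.ruleTy r = .base s) ∧
    (∀ i, i < (X.ruleCtx r).length → FreeIn i (X.lhs r))

/-- The usual rewrite relation `M →* N` of a higher-order rewrite system:
the reflexive-transitive congruence closure (on βη-classes of well-typed
terms) of the substitution instances of the rules. -/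
inductive Rw (X : Sig2 S) : List (Ty S) → Tm X.sig → Tm X.sig → Ty S → Prop
  | refl {Γ M A} : HasTy X.sig Γ M A → Rw X Γ M M A
  | trans {Γ M N P A} : Rw X Γ M N A → Rw X Γ N P A → Rw X Γ M P A
  | step {Γ} (r : X.Rule) (σ : ℕ → Tm X.sig)
      (h : ∀ i (hi : i < (X.ruleCtx r).length),
        HasTy X.sig Γ (σ i) ((X.ruleCtx r).get ⟨i, hi⟩)) :
      Rw X Γ ((X.lhs r).sub σ) ((X.rhs r).sub σ) (X.ruleTy r)
  | pairCong {Γ M M' N N' A B} : Rw X Γ M M' A → Rw X Γ N N' B →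
      Rw X Γ (.pair M N) (.pair M' N') (.prod A B)
  | fstCong {Γ M M' A B} : Rw X Γ M M' (.prod A B) → Rw X Γ (.fst M) (.fst M') A
  | sndCong {Γ M M' A B} : Rw X Γ M M' (.prod A B) → Rw X Γ (.snd M) (.snd M') B
  | lamCong {Γ M M' A B} : Rw X (A :: Γ) M M' B →
      Rw X Γ (.lam A M) (.lam A M') (.arr A B)
  | appCong {Γ M M' N N' A B} : Rw X Γ M M' (.arr A B) → Rw X Γ N N' A →
      Rw X Γ (.app M N) (.app M' N') B
  | constCong {Γ} {c : X.sig.Op} {args args' : ℕ → Tm X.sig}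
      (h : ∀ i (hi : i < (X.sig.opCtx c).length),
        Rw X Γ (args i) (args' i) ((X.sig.opCtx c).get ⟨i, hi⟩)) :
      Rw X Γ (.const c args) (.const c args') (X.sig.opTy c)
  | conv {Γ M N M' N' A} : Rw X Γ M N A → Beq X.sig Γ M M' A →
      Beq X.sig Γ N N' A → Rw X Γ M' N' A

/-! Rewriting is closed under βη-conversion of its endpoints, so each universal property
reduces to an extensionality law: terms of type `1` are η-equal to `()`, a product term to
`⟨fst M, snd M⟩`, and a function term to `λx. M x`. Congruence of rewriting for `fst`, `snd`,
pairing and `λ` then gives the isomorphisms, except for `M →* N ⇒ M x →* N x`, which needs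
weakening: stability of typing, βη-conversion and rewriting under typed renamings. -/

namespace Tm

variable {Sg : Sig1 S}

lemma liftRen_comp (f g : ℕ → ℕ) : liftRen g ∘ liftRen f = liftRen (g ∘ f) := by
  funext n; cases n <;> rfl

lemma ren_ren (M : Tm Sg) (f g : ℕ → ℕ) : (M.ren f).ren g = M.ren (g ∘ f) := by
  induction M generalizing f g <;> simp_all [ren, liftRen_comp]

lemma sub_ren (M : Tm Sg) (f : ℕ → ℕ) (σ : ℕ → Tm Sg) :
    (M.ren f).sub σ = M.sub (σ ∘ f) := by
  induction M generalizing f σ with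
  | lam A M ih =>
      simp only [ren, sub, ih]
      congr 2; funext n; cases n <;> rfl
  | _ => simp_all [ren, sub]

lemma ren_succ_liftRen (M : Tm Sg) (f : ℕ → ℕ) :
    (M.ren Nat.succ).ren (liftRen f) = (M.ren f).ren Nat.succ := by
  rw [ren_ren, ren_ren]; rfl

lemma ren_sub (M : Tm Sg) (σ : ℕ → Tm Sg) (f : ℕ → ℕ) :
    (M.sub σ).ren f = M.sub (fun n => (σ n).ren f) := by
  induction M generalizing σ f with
  | lam A M ih =>
      simp only [ren, sub, ih]
      congr 2; funext n
      cases n with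
      | zero => rfl
      | succ n => exact ren_succ_liftRen (σ n) f
  | _ => simp_all [ren, sub]

lemma sub_cons_ren (M N : Tm Sg) (f : ℕ → ℕ) :
    (M.sub (cons N var)).ren f = (M.ren (liftRen f)).sub (cons (N.ren f) var) := by
  rw [ren_sub, sub_ren]
  congr 1; funext n; cases n <;> rfl

end Tm

def IsTypedRenaming (f : ℕ → ℕ) (Γ Δ : List (Ty S)) : Prop :=
  ∀ n (h : n < Γ.length), ∃ h' : f n < Δ.length, Δ.get ⟨f n, h'⟩ = Γ.get ⟨n, h⟩

namespace IsTypedRenaming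

variable {f : ℕ → ℕ} {Γ Δ : List (Ty S)}

lemma liftRen (hf : IsTypedRenaming f Γ Δ) (A : Ty S) :
    IsTypedRenaming (Tm.liftRen f) (A :: Γ) (A :: Δ)
  | 0, _ => ⟨Nat.succ_pos _, rfl⟩
  | n + 1, h =>
      let ⟨h', e⟩ := hf n (Nat.lt_of_succ_lt_succ h)
      ⟨Nat.succ_lt_succ h', e⟩

lemma succ (Γ : List (Ty S)) (A : Ty S) : IsTypedRenaming Nat.succ Γ (A :: Γ) :=
  fun _ h => ⟨Nat.succ_lt_succ h, rfl⟩

end IsTypedRenaming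

section Renaming

variable {Sg : Sig1 S} {Γ Δ : List (Ty S)} {M N : Tm Sg} {A : Ty S} {f : ℕ → ℕ}

lemma HasTy.ren (h : HasTy Sg Γ M A) (hf : IsTypedRenaming f Γ Δ) :
    HasTy Sg Δ (M.ren f) A := by
  induction h generalizing Δ f with
  | var h =>
      obtain ⟨h', e⟩ := hf _ h
      exact e ▸ HasTy.var h'
  | unit => exact HasTy.unit
  | pair _ _ ih₁ ih₂ => exact HasTy.pair (ih₁ hf) (ih₂ hf)
  | fst _ ih => exact HasTy.fst (ih hf)
  | snd _ ih => exact HasTy.snd (ih hf)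
  | lam _ ih => exact HasTy.lam (ih (hf.liftRen _))
  | app _ _ ih₁ ih₂ => exact HasTy.app (ih₁ hf) (ih₂ hf)
  | const _ ih => exact HasTy.const fun i hi => ih i hi hf

lemma Beq.ren (h : Beq Sg Γ M N A) (hf : IsTypedRenaming f Γ Δ) :
    Beq Sg Δ (M.ren f) (N.ren f) A := by
  induction h generalizing Δ f with
  | refl h => exact Beq.refl (h.ren hf)
  | symm _ ih => exact (ih hf).symm
  | trans _ _ ih₁ ih₂ => exact (ih₁ hf).trans (ih₂ hf)
  | pairCong _ _ ih₁ ih₂ => exact Beq.pairCong (ih₁ hf) (ih₂ hf)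
  | fstCong _ ih => exact Beq.fstCong (ih hf)
  | sndCong _ ih => exact Beq.sndCong (ih hf)
  | lamCong _ ih => exact Beq.lamCong (ih (hf.liftRen _))
  | appCong _ _ ih₁ ih₂ => exact Beq.appCong (ih₁ hf) (ih₂ hf)
  | constCong _ ih => exact Beq.constCong fun i hi => ih i hi hf
  | beta hM hN =>
      rw [Tm.sub_cons_ren]
      exact Beq.beta (hM.ren (hf.liftRen _)) (hN.ren hf)
  | eta hM =>
      simp only [Tm.ren, Tm.liftRen, Tm.ren_succ_liftRen]
      exact Beq.eta (hM.ren hf)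
  | prodBeta1 hM hN => exact Beq.prodBeta1 (hM.ren hf) (hN.ren hf)
  | prodBeta2 hM hN => exact Beq.prodBeta2 (hM.ren hf) (hN.ren hf)
  | prodEta hM => exact Beq.prodEta (hM.ren hf)
  | unitEta hM => exact Beq.unitEta (hM.ren hf)

lemma Rw.ren {X : Sig2 S} {M N : Tm X.sig} (h : Rw X Γ M N A)
    (hf : IsTypedRenaming f Γ Δ) : Rw X Δ (M.ren f) (N.ren f) A := by
  induction h generalizing Δ f with
  | refl h => exact Rw.refl (h.ren hf)
  | trans _ _ ih₁ ih₂ => exact (ih₁ hf).trans (ih₂ hf)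
  | step r σ hσ =>
      rw [Tm.ren_sub, Tm.ren_sub]
      exact Rw.step r _ fun i hi => (hσ i hi).ren hf
  | pairCong _ _ ih₁ ih₂ => exact Rw.pairCong (ih₁ hf) (ih₂ hf)
  | fstCong _ ih => exact Rw.fstCong (ih hf)
  | sndCong _ ih => exact Rw.sndCong (ih hf)
  | lamCong _ ih => exact Rw.lamCong (ih (hf.liftRen _))
  | appCong _ _ ih₁ ih₂ => exact Rw.appCong (ih₁ hf) (ih₂ hf)
  | constCong _ ih => exact Rw.constCong fun i hi => ih i hi hf
  | conv _ h₁ h₂ ih => exact (ih hf).conv (h₁.ren hf) (h₂.ren hf)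

end Renaming

section UniversalProperties

variable {X : Sig2 S} {Γ : List (Ty S)} {M N : Tm X.sig} {A B : Ty S}

lemma Beq.of_hasTy_unit (hM : HasTy X.sig Γ M .unit) (hN : HasTy X.sig Γ N .unit) :
    Beq X.sig Γ M N .unit :=
  (Beq.unitEta hM).trans (Beq.unitEta hN).symm

lemma Rw.of_hasTy_unit (hM : HasTy X.sig Γ M .unit) (hN : HasTy X.sig Γ N .unit) :
    Rw X Γ M N .unit :=
  (Rw.refl HasTy.unit).conv (Beq.unitEta hM).symm (Beq.unitEta hN).symm

lemma Rw.prod_iff (hM : HasTy X.sig Γ M (.prod A B)) (hN : HasTy X.sig Γ N (.prod A B)) :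
    Rw X Γ M N (.prod A B) ↔ Rw X Γ (.fst M) (.fst N) A ∧ Rw X Γ (.snd M) (.snd N) B :=
  ⟨fun h => ⟨h.fstCong, h.sndCong⟩, fun ⟨h₁, h₂⟩ =>
    (Rw.pairCong h₁ h₂).conv (Beq.prodEta hM).symm (Beq.prodEta hN).symm⟩

lemma Rw.arr_iff (hM : HasTy X.sig Γ M (.arr A B)) (hN : HasTy X.sig Γ N (.arr A B)) :
    Rw X Γ M N (.arr A B) ↔
      Rw X (A :: Γ) (.app (M.ren Nat.succ) (.var 0)) (.app (N.ren Nat.succ) (.var 0)) B :=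
  ⟨fun h => Rw.appCong (h.ren (IsTypedRenaming.succ Γ A)) (Rw.refl (HasTy.var (by simp))),
    fun h => (Rw.lamCong h).conv (Beq.eta hM).symm (Beq.eta hN).symm⟩

end UniversalProperties

theorem rewriting_2category_cartesian_closed_general (X : Sig2 S) :
    -- terminal object: each hom-category C(Γ, 1) is isomorphic to the
    -- terminal category
    (∀ (Γ : List (Ty S)) (M N : Tm X.sig),
      HasTy X.sig Γ M .unit → HasTy X.sig Γ N .unit →
      Beq X.sig Γ M N .unit ∧ Rw X Γ M N .unit) ∧
    -- binary products: C(Γ, A × B) ≅ C(Γ, A) × C(Γ, B) as preorders,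
    -- via the projections
    (∀ (Γ : List (Ty S)) (A B : Ty S) (M N : Tm X.sig),
      HasTy X.sig Γ M (.prod A B) → HasTy X.sig Γ N (.prod A B) →
      (Rw X Γ M N (.prod A B) ↔
        Rw X Γ (.fst M) (.fst N) A ∧ Rw X Γ (.snd M) (.snd N) B)) ∧
    -- exponentials: C(Γ, B^A) ≅ C(A × Γ, B) as preorders, via evaluation
    (∀ (Γ : List (Ty S)) (A B : Ty S) (M N : Tm X.sig),
      HasTy X.sig Γ M (.arr A B) → HasTy X.sig Γ N (.arr A B) →
      (Rw X Γ M N (.arr A B) ↔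
        Rw X (A :: Γ) (.app (M.ren Nat.succ) (.var 0))
          (.app (N.ren Nat.succ) (.var 0)) B)) :=
  ⟨fun _ _ _ hM hN => ⟨Beq.of_hasTy_unit hM hN, Rw.of_hasTy_unit hM hN⟩,
    fun _ _ _ _ _ => Rw.prod_iff, fun _ _ _ _ _ => Rw.arr_iff⟩

/-- For a higher-order rewrite system `X`, the locally-preordered
2-category `R(X)` — objects the types over the sorts of `X`, morphisms
λ-terms modulo βη, and a (unique) 2-cell `M → N` exactly when `M` rewrites
to `N` — is cartesian closed as a 2-category: its hom-preorders satisfy the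
universal properties of the terminal object, of binary products, and of
exponentials. -/
theorem rewriting_2category_cartesian_closed (X : Sig2 S) (hX : IsHRS X) :
    -- terminal object: each hom-category C(Γ, 1) is isomorphic to the
    -- terminal category
    (∀ (Γ : List (Ty S)) (M N : Tm X.sig),
      HasTy X.sig Γ M .unit → HasTy X.sig Γ N .unit →
      Beq X.sig Γ M N .unit ∧ Rw X Γ M N .unit) ∧
    -- binary products: C(Γ, A × B) ≅ C(Γ, A) × C(Γ, B) as preorders,
    -- via the projections
    (∀ (Γ : List (Ty S)) (A B : Ty S) (M N : Tm X.sig),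
      HasTy X.sig Γ M (.prod A B) → HasTy X.sig Γ N (.prod A B) →
      (Rw X Γ M N (.prod A B) ↔
        Rw X Γ (.fst M) (.fst N) A ∧ Rw X Γ (.snd M) (.snd N) B)) ∧
    -- exponentials: C(Γ, B^A) ≅ C(A × Γ, B) as preorders, via evaluation
    (∀ (Γ : List (Ty S)) (A B : Ty S) (M N : Tm X.sig),
      HasTy X.sig Γ M (.arr A B) → HasTy X.sig Γ N (.arr A B) →
      (Rw X Γ M N (.arr A B) ↔
        Rw X (A :: Γ) (.app (M.ren Nat.succ) (.var 0))
          (.app (N.ren Nat.succ) (.var 0)) B)) :=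
  rewriting_2category_cartesian_closed_general X
end
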